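/- Monogamy relation (7): Let n ≥ 3, let ρ be an n-qubit density matrix, and let k, l, m be pairwise distinct qubits. Then M_{kl}(ρ) + M_{lm}(ρ) + M_{km}(ρ) ≤ 3, where M_{kl}(ρ) = Σ_{i,j∈{1,2}} (T^{kl}_{ij}(ρ))². -/

import Mathlib

noncomputable def pauli : ℕ → Matrix (Fin 2) (Fin 2) ℂ
  | 1 => !![0, 1; 1, 0]
  | 2 => !![0, -Complex.I; Complex.I, 0]
  | 3 => !![1, 0; 0, -1]
  | _ => 1

/-- The `ι`-fold Kronecker product of single-qubit operators `pauli (f k)`. -/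
noncomputable def kronOp {ι : Type*} [Fintype ι] [DecidableEq ι] (f : ι → ℕ) :
    Matrix (ι → Fin 2) (ι → Fin 2) ℂ :=
  Matrix.of fun x y => ∏ k, pauli (f k) (x k) (y k)

/-- Two-body correlation `T^{kl}_{ij}(ρ)`. -/
noncomputable def corr {ι : Type*} [Fintype ι] [DecidableEq ι]
    (ρ : Matrix (ι → Fin 2) (ι → Fin 2) ℂ) (k l : ι) (i j : ℕ) : ℝ :=
  ((ρ * kronOp (fun q => if q = k then i else if q = l then j else 0)).trace).re

/-- Single-qubit Bloch vector component `b^{(q)}_i(ρ)`. -/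
noncomputable def bloch {ι : Type*} [Fintype ι] [DecidableEq ι]
    (ρ : Matrix (ι → Fin 2) (ι → Fin 2) ℂ) (q : ι) (i : ℕ) : ℝ :=
  ((ρ * kronOp (fun p => if p = q then i else 0)).trace).re

/-- `M_{kl}(ρ)`. -/
noncomputable def Mkl {ι : Type*} [Fintype ι] [DecidableEq ι]
    (ρ : Matrix (ι → Fin 2) (ι → Fin 2) ℂ) (k l : ι) : ℝ :=
  ∑ i ∈ Finset.Icc 1 2, ∑ j ∈ Finset.Icc 1 2, (corr ρ k l i j) ^ 2

/-- `M(ρ) = Σ_{k<l} M_{kl}(ρ)`. -/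
noncomputable def Mtot {ι : Type*} [Fintype ι] [LinearOrder ι]
    (ρ : Matrix (ι → Fin 2) (ι → Fin 2) ℂ) : ℝ :=
  ∑ p ∈ Finset.univ.filter (fun p : ι × ι => p.1 < p.2), Mkl ρ p.1 p.2

/-- Density matrix of a pure state `ψ`: `ρ_ψ = ψ ψ†`. -/
noncomputable def pureDensity {ι : Type*} [Fintype ι] [DecidableEq ι]
    (ψ : (ι → Fin 2) → ℂ) : Matrix (ι → Fin 2) (ι → Fin 2) ℂ :=
  Matrix.of fun x y => ψ x * (starRingEnd ℂ) (ψ y)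

/-- `ψ` is a unit vector. -/
def UnitVec {ι : Type*} [Fintype ι] [DecidableEq ι] (ψ : (ι → Fin 2) → ℂ) : Prop :=
  ∑ x, Complex.normSq (ψ x) = 1

/-- Preferred-basis condition: all transverse Bloch components vanish. -/
def PreferredBasis {ι : Type*} [Fintype ι] [DecidableEq ι]
    (ρ : Matrix (ι → Fin 2) (ι → Fin 2) ℂ) : Prop :=
  ∀ q : ι, bloch ρ q 1 = 0 ∧ bloch ρ q 2 = 0

open scoped ComplexOrder


section Aux
open scoped Matrix

lemma trace_re_nonneg_of_psd {d : Type*} [Fintype d] [DecidableEq d]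
    {M : Matrix d d ℂ} (hM : M.PosSemidef) : 0 ≤ M.trace.re := by
  have h : ∀ i, 0 ≤ (M i i).re := by
    intro i
    have := hM.re_dotProduct_nonneg (Pi.single i 1)
    simpa [dotProduct, Matrix.mulVec, Pi.single_apply] using this
  simpa [Matrix.trace, Matrix.diag, Complex.re_sum] using Finset.sum_nonneg fun i _ => h i

open scoped MatrixOrder in
lemma trace_mul_re_nonneg {d : Type*} [Fintype d] [DecidableEq d]
    {P Q : Matrix d d ℂ} (hP : P.PosSemidef) (hQ : Q.PosSemidef) :
    0 ≤ ((P * Q).trace).re := by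
  have h1 : P * Q = P * (CFC.sqrt Q * CFC.sqrt Q) := by rw [CFC.sqrt_mul_sqrt_self Q hQ.nonneg]
  have h2 : ((P * Q).trace) = (CFC.sqrt Q * P * CFC.sqrt Q).trace := by
    rw [h1, ← Matrix.mul_assoc, Matrix.trace_mul_cycle]
  have h3 : (CFC.sqrt Q * P * CFC.sqrt Q).PosSemidef := by
    have := hP.mul_mul_conjTranspose_same (CFC.sqrt Q)
    rwa [(Matrix.nonneg_iff_posSemidef.mp (CFC.sqrt_nonneg Q)).1.eq] at this
  rw [h2]
  exact trace_re_nonneg_of_psd h3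

lemma complementarity {d : Type*} [Fintype d] [DecidableEq d]
    {N : Type*} [Fintype N] [DecidableEq N]
    (ρ : Matrix d d ℂ) (hρ : ρ.PosSemidef) (hTr : ρ.trace = 1)
    (A : N → Matrix d d ℂ) (hH : ∀ i, (A i).IsHermitian)
    (hInv : ∀ i, A i * A i = 1)
    (hAC : ∀ i j, i ≠ j → A i * A j = -(A j * A i)) :
    ∑ i, (((ρ * A i).trace).re) ^ 2 ≤ 1 := by
  set t : N → ℝ := fun i => ((ρ * A i).trace).re with ht
  set c : ℝ := ∑ i, t i ^ 2 with hc
  have hc0 : 0 ≤ c := Finset.sum_nonneg fun i _ => sq_nonneg _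
  rcases eq_or_lt_of_le hc0 with h0 | hpos
  · rw [← h0]; norm_num
  set G : Matrix d d ℂ := ∑ i, (t i : ℂ) • A i with hG
  -- G * G = c • 1
  have hG2 : G * G = (c : ℂ) • 1 := by
    rw [hG, Finset.sum_mul_sum]
    have : ∀ i j : N, ((t i : ℂ) • A i) * ((t j : ℂ) • A j)
        = ((t i * t j : ℝ) : ℂ) • (A i * A j) := by
      intro i j
      rw [Matrix.smul_mul, Matrix.mul_smul, smul_smul, Complex.ofReal_mul]
    simp_rw [this]
    rw [← Finset.sum_product']
    rw [← Finset.sum_filter_add_sum_filter_not (Finset.univ ×ˢ Finset.univ)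
        (fun p : N × N => p.1 = p.2)]
    have hdiag : ∑ p ∈ (Finset.univ ×ˢ Finset.univ).filter (fun p : N × N => p.1 = p.2),
        ((t p.1 * t p.2 : ℝ) : ℂ) • (A p.1 * A p.2) = (c : ℂ) • 1 := by
      rw [Finset.sum_filter]
      rw [Finset.sum_product]
      have : ∀ i : N, (∑ j, if i = j then ((t i * t j : ℝ) : ℂ) • (A i * A j) else 0)
          = ((t i ^2 : ℝ) : ℂ) • (1 : Matrix d d ℂ) := by
        intro i
        rw [Finset.sum_ite_eq (Finset.univ) i (fun j => ((t i * t j : ℝ) : ℂ) • (A i * A j))]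
        simp [hInv i, sq]
      simp_rw [this, hc, ← Finset.sum_smul]
      push_cast
      rfl
    have hoff : ∑ p ∈ (Finset.univ ×ˢ Finset.univ).filter (fun p : N × N => ¬ p.1 = p.2),
        ((t p.1 * t p.2 : ℝ) : ℂ) • (A p.1 * A p.2) = 0 := by
      apply Finset.sum_involution (fun p _ => p.swap)
      · intro p hp
        simp only [Finset.mem_filter] at hp
        have := hAC p.1 p.2 hp.2
        simp [Prod.swap, this, mul_comm (t p.1) (t p.2)]
      · intro p hp _ hs
        simp only [Finset.mem_filter] at hp
        exact hp.2 (congrArg Prod.fst hs).symm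
      · intro p hp; simp
      · intro p hp
        simp only [Finset.mem_filter, Finset.mem_product, Finset.mem_univ, true_and,
          Prod.fst_swap, Prod.snd_swap] at hp ⊢
        intro h
        exact hp h.symm
    rw [hdiag, hoff, add_zero]
  -- trace of ρ * G
  have htrG : ((ρ * G).trace).re = c := by
    rw [hG, Matrix.mul_sum, Matrix.trace_sum, Complex.re_sum, hc]
    congr 1; funext i
    rw [Matrix.mul_smul, Matrix.trace_smul, smul_eq_mul, Complex.re_ofReal_mul, sq]
  have hGH : G.IsHermitian := by
    rw [hG]
    unfold Matrix.IsHermitian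
    rw [Matrix.conjTranspose_sum]
    congr 1; funext i
    rw [Matrix.conjTranspose_smul, (hH i).eq, Complex.star_def, Complex.conj_ofReal]
  set s : ℝ := Real.sqrt c with hsdef
  have hs2 : s ^ 2 = c := Real.sq_sqrt hc0
  have hsp : 0 < s := Real.sqrt_pos.mpr hpos
  set B : Matrix d d ℂ := (s : ℂ) • (1 : Matrix d d ℂ) - G with hBdef
  have hBH : B.IsHermitian := by
    unfold Matrix.IsHermitian
    rw [hBdef, Matrix.conjTranspose_sub, Matrix.conjTranspose_smul, hGH.eq,
      Matrix.conjTranspose_one, Complex.star_def, Complex.conj_ofReal]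
  have hcs : (c : ℂ) = (s : ℂ) * (s : ℂ) := by
    rw [← hs2]; push_cast; ring
  have hBB : B * B = ((2 * s : ℝ) : ℂ) • B := by
    rw [hBdef, Matrix.sub_mul, Matrix.mul_sub, Matrix.mul_sub, hG2]
    simp only [Matrix.smul_mul, Matrix.mul_smul, Matrix.one_mul, Matrix.mul_one]
    rw [hcs]
    push_cast
    module
  obtain ⟨u, hu⟩ : ∃ u : ℝ, u * u = 1 / (2 * s) :=
    ⟨Real.sqrt (1 / (2 * s)), Real.mul_self_sqrt (div_nonneg zero_le_one (by linarith))⟩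
  have hu2 : (u : ℂ) * (u : ℂ) * ((2 * s : ℝ) : ℂ) = 1 := by
    have h3 : u * u * (2 * s) = 1 := by
      rw [hu]; field_simp
    calc (u : ℂ) * (u : ℂ) * ((2 * s : ℝ) : ℂ) = ((u * u * (2 * s) : ℝ) : ℂ) := by
          push_cast; ring
      _ = 1 := by rw [h3]; norm_num
  have hBpsd : B.PosSemidef := by
    have h1 : ((u : ℂ) • B)ᴴ * ((u : ℂ) • B) = B := by
      rw [Matrix.conjTranspose_smul, hBH.eq, Matrix.smul_mul, Matrix.mul_smul, hBB,
        smul_smul, smul_smul, Complex.star_def, Complex.conj_ofReal, hu2, one_smul]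
    rw [← h1]
    exact Matrix.posSemidef_conjTranspose_mul_self _
  have key : 0 ≤ ((ρ * B).trace).re := trace_mul_re_nonneg hρ hBpsd
  have hkey : c ≤ s := by
    have h2 : (ρ * B).trace = (s : ℂ) * ρ.trace - (ρ * G).trace := by
      rw [hBdef, Matrix.mul_sub, Matrix.mul_smul, Matrix.mul_one, Matrix.trace_sub,
        Matrix.trace_smul, smul_eq_mul]
    rw [h2, hTr, mul_one, Complex.sub_re, Complex.ofReal_re, htrG] at key
    linarith
  nlinarith [hs2, hkey, hsp, sq_nonneg (s - 1)]

lemma pauli_zero : pauli 0 = 1 := rfl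

lemma pauli_herm (a : ℕ) : (pauli a)ᴴ = pauli a := by
  match a with
  | 0 => rw [show pauli 0 = 1 from rfl, Matrix.conjTranspose_one]
  | 1 => ext i j; fin_cases i <;> fin_cases j <;>
      simp [pauli, Matrix.conjTranspose_apply]
  | 2 => ext i j; fin_cases i <;> fin_cases j <;>
      simp [pauli, Matrix.conjTranspose_apply]
  | 3 => ext i j; fin_cases i <;> fin_cases j <;>
      simp [pauli, Matrix.conjTranspose_apply]
  | (n+4) => rw [show pauli (n+4) = 1 from rfl, Matrix.conjTranspose_one]

lemma pauli_one_sq : pauli 1 * pauli 1 = 1 := by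
  ext i j; fin_cases i <;> fin_cases j <;>
    simp [pauli, Matrix.mul_apply, Fin.sum_univ_two, Matrix.one_apply]

lemma pauli_two_sq : pauli 2 * pauli 2 = 1 := by
  ext i j; fin_cases i <;> fin_cases j <;>
    simp [pauli, Matrix.mul_apply, Fin.sum_univ_two, Matrix.one_apply]

lemma pauli_swap : pauli 2 * pauli 1 = (-1 : ℂ) • (pauli 1 * pauli 2) := by
  ext i j; fin_cases i <;> fin_cases j <;>
    simp [pauli, Matrix.mul_apply, Fin.sum_univ_two]

lemma pauli_swap' : pauli 1 * pauli 2 = (-1 : ℂ) • (pauli 2 * pauli 1) := by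
  rw [pauli_swap]; simp

section kron
variable {ι : Type*} [Fintype ι] [DecidableEq ι]

lemma kron_mul (F G : ι → ℕ) :
    kronOp F * kronOp G
      = Matrix.of fun x y => ∏ q, (pauli (F q) * pauli (G q)) (x q) (y q) := by
  ext x y
  simp only [Matrix.mul_apply, Matrix.of_apply, kronOp]
  rw [show (fun q : ι => (∑ a, pauli (F q) (x q) a * pauli (G q) a (y q))) = _ from rfl]
  calc ∑ z : ι → Fin 2, (∏ q, pauli (F q) (x q) (z q)) * ∏ q, pauli (G q) (z q) (y q)
      = ∑ z : ι → Fin 2, ∏ q, (pauli (F q) (x q) (z q) * pauli (G q) (z q) (y q)) := by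
        refine Finset.sum_congr rfl fun z _ => ?_
        rw [Finset.prod_mul_distrib]
    _ = ∏ q, ∑ a, pauli (F q) (x q) a * pauli (G q) a (y q) := by
        rw [Finset.prod_univ_sum]
        rw [Fintype.piFinset_univ]

lemma kron_herm (F : ι → ℕ) : (kronOp F).IsHermitian := by
  unfold Matrix.IsHermitian
  ext x y
  simp only [Matrix.conjTranspose_apply, kronOp, Matrix.of_apply, star_prod]
  refine Finset.prod_congr rfl fun q _ => ?_
  rw [← Matrix.conjTranspose_apply, pauli_herm]

lemma kron_invol (F : ι → ℕ) (h : ∀ q, pauli (F q) * pauli (F q) = 1) :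
    kronOp F * kronOp F = 1 := by
  rw [kron_mul]
  ext x y
  simp only [Matrix.of_apply]
  calc ∏ q, (pauli (F q) * pauli (F q)) (x q) (y q)
      = ∏ q, (1 : Matrix (Fin 2) (Fin 2) ℂ) (x q) (y q) := by
        refine Finset.prod_congr rfl fun q _ => ?_; rw [h q]
    _ = (1 : Matrix (ι → Fin 2) (ι → Fin 2) ℂ) x y := by
        by_cases hxy : x = y
        · subst hxy; simp [Matrix.one_apply]
        · obtain ⟨q, hq⟩ := Function.ne_iff.mp hxy
          rw [Matrix.one_apply_ne hxy]
          refine Finset.prod_eq_zero (Finset.mem_univ q) ?_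
          simp [Matrix.one_apply, hq]

lemma kron_anticomm (F G : ι → ℕ) (ε : ι → ℂ)
    (h : ∀ q, pauli (G q) * pauli (F q) = ε q • (pauli (F q) * pauli (G q)))
    (hε : ∏ q, ε q = -1) :
    kronOp G * kronOp F = -(kronOp F * kronOp G) := by
  rw [kron_mul, kron_mul]
  ext x y
  simp only [Matrix.of_apply, Matrix.neg_apply]
  calc ∏ q, (pauli (G q) * pauli (F q)) (x q) (y q)
      = ∏ q, ε q * (pauli (F q) * pauli (G q)) (x q) (y q) := by
        refine Finset.prod_congr rfl fun q _ => ?_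
        rw [h q]; rfl
    _ = (∏ q, ε q) * ∏ q, (pauli (F q) * pauli (G q)) (x q) (y q) := by
        rw [Finset.prod_mul_distrib]
    _ = -(∏ q, (pauli (F q) * pauli (G q)) (x q) (y q)) := by rw [hε]; ring

end kron

lemma pauli_zero_sq : pauli 0 * pauli 0 = 1 := by rw [pauli_zero, one_mul]

lemma comm0R (a : ℕ) : pauli a * pauli 0 = (1:ℂ) • (pauli 0 * pauli a) := by
  simp [pauli_zero]

lemma comm0L (a : ℕ) : pauli 0 * pauli a = (1:ℂ) • (pauli a * pauli 0) := by
  simp [pauli_zero]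

lemma commSelf (a : ℕ) : pauli a * pauli a = (1:ℂ) • (pauli a * pauli a) :=
  (one_smul _ _).symm

section f3
variable {ι : Type*} [Fintype ι] [DecidableEq ι]

def f3 (k l m : ι) (a b c : ℕ) : ι → ℕ :=
  fun q => if q = k then a else if q = l then b else if q = m then c else 0

lemma f3_invol (k l m : ι) (a b c : ℕ)
    (ha : pauli a * pauli a = 1) (hb : pauli b * pauli b = 1)
    (hc : pauli c * pauli c = 1) :
    kronOp (f3 k l m a b c) * kronOp (f3 k l m a b c) = 1 := by
  apply kron_invol
  intro q
  unfold f3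
  split_ifs <;> first | exact ha | exact hb | exact hc | exact pauli_zero_sq

lemma f3_anticomm (k l m : ι) (hkl : k ≠ l) (hlm : l ≠ m) (hkm : k ≠ m)
    (a b c a' b' c' : ℕ) (sk sl sm : ℂ)
    (h1 : pauli a' * pauli a = sk • (pauli a * pauli a'))
    (h2 : pauli b' * pauli b = sl • (pauli b * pauli b'))
    (h3 : pauli c' * pauli c = sm • (pauli c * pauli c'))
    (hs : sk * (sl * sm) = -1) :
    kronOp (f3 k l m a' b' c') * kronOp (f3 k l m a b c)
      = -(kronOp (f3 k l m a b c) * kronOp (f3 k l m a' b' c')) := by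
  apply kron_anticomm _ _
    (fun q => if q = k then sk else if q = l then sl else if q = m then sm else 1)
  · intro q
    unfold f3
    split_ifs <;> first | exact h1 | exact h2 | exact h3 | exact (one_smul _ _).symm
  · have hk : k ∉ ({l, m} : Finset ι) := by simp [hkl, hkm]
    have hl : l ∉ ({m} : Finset ι) := by simp [hlm]
    rw [← Finset.prod_subset (Finset.subset_univ ({k, l, m} : Finset ι))
        (fun x _ hx => ?_)]
    · rw [Finset.prod_insert hk, Finset.prod_insert hl, Finset.prod_singleton]
      rw [if_pos rfl, if_neg (Ne.symm hkl), if_pos rfl, if_neg (Ne.symm hkm),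
        if_neg (Ne.symm hlm), if_pos rfl]
      exact hs
    · simp only [Finset.mem_insert, Finset.mem_singleton, not_or] at hx
      rw [if_neg hx.1, if_neg hx.2.1, if_neg hx.2.2]

end f3

section FourOps
variable {d : Type*} [Fintype d] [DecidableEq d]

lemma four_ops (ρ : Matrix d d ℂ) (hρ : ρ.PosSemidef) (hTr : ρ.trace = 1)
    (A B C D : Matrix d d ℂ)
    (hHA : A.IsHermitian) (hHB : B.IsHermitian) (hHC : C.IsHermitian)
    (hHD : D.IsHermitian)
    (hA2 : A * A = 1) (hB2 : B * B = 1) (hC2 : C * C = 1) (hD2 : D * D = 1)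
    (hAB : A * B = -(B * A)) (hAC : A * C = -(C * A)) (hAD : A * D = -(D * A))
    (hBC : B * C = -(C * B)) (hBD : B * D = -(D * B)) (hCD : C * D = -(D * C)) :
    ((ρ * A).trace.re) ^ 2 + ((ρ * B).trace.re) ^ 2
      + ((ρ * C).trace.re) ^ 2 + ((ρ * D).trace.re) ^ 2 ≤ 1 := by
  have flip : ∀ X Y : Matrix d d ℂ, X * Y = -(Y * X) → Y * X = -(X * Y) := by
    intro X Y h; rw [h, neg_neg]
  have key := complementarity ρ hρ hTr ![A, B, C, D]
    (by intro i; fin_cases i <;> simpa)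
    (by intro i; fin_cases i <;> simpa)
    (by
      intro i j hij
      fin_cases i <;> fin_cases j <;>
        simp only [Matrix.cons_val_zero, Matrix.cons_val_one, Matrix.head_cons,
          Matrix.cons_val_two, Matrix.tail_cons, Matrix.cons_val_three] <;>
        first
          | exact absurd rfl hij
          | assumption
          | exact flip _ _ hAB
          | exact flip _ _ hAC
          | exact flip _ _ hAD
          | exact flip _ _ hBC
          | exact flip _ _ hBD
          | exact flip _ _ hCD)
  rw [Fin.sum_univ_four] at key
  simpa using key

end FourOps

section Cliques
variable {ι : Type*} [Fintype ι] [DecidableEq ι]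
variable (ρ : Matrix (ι → Fin 2) (ι → Fin 2) ℂ)

lemma cliqueAB (hρ : ρ.PosSemidef) (hTr : ρ.trace = 1)
    (k l m : ι) (hkl : k ≠ l) (hlm : l ≠ m) (hkm : k ≠ m) (u v : ℕ)
    (hu2 : pauli u * pauli u = 1) (hv2 : pauli v * pauli v = 1)
    (hvu : pauli u * pauli v = (-1 : ℂ) • (pauli v * pauli u)) :
    ((ρ * kronOp (f3 k l m 1 u 0)).trace.re) ^ 2
      + ((ρ * kronOp (f3 k l m 2 u 0)).trace.re) ^ 2
      + ((ρ * kronOp (f3 k l m 0 v 1)).trace.re) ^ 2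
      + ((ρ * kronOp (f3 k l m 0 v 2)).trace.re) ^ 2 ≤ 1 := by
  refine four_ops ρ hρ hTr _ _ _ _ (kron_herm _) (kron_herm _) (kron_herm _) (kron_herm _)
    (f3_invol k l m _ _ _ pauli_one_sq hu2 pauli_zero_sq)
    (f3_invol k l m _ _ _ pauli_two_sq hu2 pauli_zero_sq)
    (f3_invol k l m _ _ _ pauli_zero_sq hv2 pauli_one_sq)
    (f3_invol k l m _ _ _ pauli_zero_sq hv2 pauli_two_sq)
    (f3_anticomm k l m hkl hlm hkm 2 u 0 1 u 0 (-1) 1 1 pauli_swap' (commSelf u) (commSelf 0) (by ring))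
    (f3_anticomm k l m hkl hlm hkm 0 v 1 1 u 0 1 (-1) 1 (comm0R 1) hvu (comm0L 1) (by ring))
    (f3_anticomm k l m hkl hlm hkm 0 v 2 1 u 0 1 (-1) 1 (comm0R 1) hvu (comm0L 2) (by ring))
    (f3_anticomm k l m hkl hlm hkm 0 v 1 2 u 0 1 (-1) 1 (comm0R 2) hvu (comm0L 1) (by ring))
    (f3_anticomm k l m hkl hlm hkm 0 v 2 2 u 0 1 (-1) 1 (comm0R 2) hvu (comm0L 2) (by ring))
    (f3_anticomm k l m hkl hlm hkm 0 v 2 0 v 1 1 1 (-1) (commSelf 0) (commSelf v) pauli_swap' (by ring))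

lemma cliqueAC (hρ : ρ.PosSemidef) (hTr : ρ.trace = 1)
    (k l m : ι) (hkl : k ≠ l) (hlm : l ≠ m) (hkm : k ≠ m) (u v : ℕ)
    (hu2 : pauli u * pauli u = 1) (hv2 : pauli v * pauli v = 1)
    (hvu : pauli u * pauli v = (-1 : ℂ) • (pauli v * pauli u)) :
    ((ρ * kronOp (f3 k l m u 1 0)).trace.re) ^ 2
      + ((ρ * kronOp (f3 k l m u 2 0)).trace.re) ^ 2
      + ((ρ * kronOp (f3 k l m v 0 1)).trace.re) ^ 2
      + ((ρ * kronOp (f3 k l m v 0 2)).trace.re) ^ 2 ≤ 1 := by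
  refine four_ops ρ hρ hTr _ _ _ _ (kron_herm _) (kron_herm _) (kron_herm _) (kron_herm _)
    (f3_invol k l m _ _ _ hu2 pauli_one_sq pauli_zero_sq)
    (f3_invol k l m _ _ _ hu2 pauli_two_sq pauli_zero_sq)
    (f3_invol k l m _ _ _ hv2 pauli_zero_sq pauli_one_sq)
    (f3_invol k l m _ _ _ hv2 pauli_zero_sq pauli_two_sq)
    (f3_anticomm k l m hkl hlm hkm u 2 0 u 1 0 1 (-1) 1 (commSelf u) pauli_swap' (commSelf 0) (by ring))
    (f3_anticomm k l m hkl hlm hkm v 0 1 u 1 0 (-1) 1 1 hvu (comm0R 1) (comm0L 1) (by ring))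
    (f3_anticomm k l m hkl hlm hkm v 0 2 u 1 0 (-1) 1 1 hvu (comm0R 1) (comm0L 2) (by ring))
    (f3_anticomm k l m hkl hlm hkm v 0 1 u 2 0 (-1) 1 1 hvu (comm0R 2) (comm0L 1) (by ring))
    (f3_anticomm k l m hkl hlm hkm v 0 2 u 2 0 (-1) 1 1 hvu (comm0R 2) (comm0L 2) (by ring))
    (f3_anticomm k l m hkl hlm hkm v 0 2 v 0 1 1 1 (-1) (commSelf v) (commSelf 0) pauli_swap' (by ring))

lemma cliqueBC (hρ : ρ.PosSemidef) (hTr : ρ.trace = 1)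
    (k l m : ι) (hkl : k ≠ l) (hlm : l ≠ m) (hkm : k ≠ m) (u v : ℕ)
    (hu2 : pauli u * pauli u = 1) (hv2 : pauli v * pauli v = 1)
    (hvu : pauli u * pauli v = (-1 : ℂ) • (pauli v * pauli u)) :
    ((ρ * kronOp (f3 k l m 0 1 u)).trace.re) ^ 2
      + ((ρ * kronOp (f3 k l m 0 2 u)).trace.re) ^ 2
      + ((ρ * kronOp (f3 k l m 1 0 v)).trace.re) ^ 2
      + ((ρ * kronOp (f3 k l m 2 0 v)).trace.re) ^ 2 ≤ 1 := by
  refine four_ops ρ hρ hTr _ _ _ _ (kron_herm _) (kron_herm _) (kron_herm _) (kron_herm _)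
    (f3_invol k l m _ _ _ pauli_zero_sq pauli_one_sq hu2)
    (f3_invol k l m _ _ _ pauli_zero_sq pauli_two_sq hu2)
    (f3_invol k l m _ _ _ pauli_one_sq pauli_zero_sq hv2)
    (f3_invol k l m _ _ _ pauli_two_sq pauli_zero_sq hv2)
    (f3_anticomm k l m hkl hlm hkm 0 2 u 0 1 u 1 (-1) 1 (commSelf 0) pauli_swap' (commSelf u) (by ring))
    (f3_anticomm k l m hkl hlm hkm 1 0 v 0 1 u 1 1 (-1) (comm0L 1) (comm0R 1) hvu (by ring))
    (f3_anticomm k l m hkl hlm hkm 2 0 v 0 1 u 1 1 (-1) (comm0L 2) (comm0R 1) hvu (by ring))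
    (f3_anticomm k l m hkl hlm hkm 1 0 v 0 2 u 1 1 (-1) (comm0L 1) (comm0R 2) hvu (by ring))
    (f3_anticomm k l m hkl hlm hkm 2 0 v 0 2 u 1 1 (-1) (comm0L 2) (comm0R 2) hvu (by ring))
    (f3_anticomm k l m hkl hlm hkm 2 0 v 1 0 v (-1) 1 1 pauli_swap' (commSelf 0) (commSelf v) (by ring))

end Cliques

end Aux

/-- Monogamy relation (7): for any `n`-qubit density matrix and
pairwise distinct qubits `k, l, m`: `M_{kl}(ρ) + M_{lm}(ρ) + M_{km}(ρ) ≤ 3`. -/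
theorem Mkl_add_Mlm_add_Mkm_le_three (n : ℕ) (hn : 3 ≤ n)
    (ρ : Matrix (Fin n → Fin 2) (Fin n → Fin 2) ℂ)
    (hρ : ρ.PosSemidef) (hTr : ρ.trace = 1)
    (k l m : Fin n) (hkl : k ≠ l) (hlm : l ≠ m) (hkm : k ≠ m) :
    Mkl ρ k l + Mkl ρ l m + Mkl ρ k m ≤ 3 := by
  have ekl : ∀ i j : ℕ, corr ρ k l i j = ((ρ * kronOp (f3 k l m i j 0)).trace).re := by
    intro i j
    have h : (fun q : Fin n => if q = k then i else if q = l then j else 0)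
        = f3 k l m i j 0 := by
      funext q; unfold f3; split_ifs <;> first | rfl | simp_all
    rw [corr, h]
  have elm : ∀ i j : ℕ, corr ρ l m i j = ((ρ * kronOp (f3 k l m 0 i j)).trace).re := by
    intro i j
    have h : (fun q : Fin n => if q = l then i else if q = m then j else 0)
        = f3 k l m 0 i j := by
      funext q; unfold f3; split_ifs <;> first | rfl | simp_all
    rw [corr, h]
  have ekm : ∀ i j : ℕ, corr ρ k m i j = ((ρ * kronOp (f3 k l m i 0 j)).trace).re := by
    intro i j
    have h : (fun q : Fin n => if q = k then i else if q = m then j else 0)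
        = f3 k l m i 0 j := by
      funext q; unfold f3; split_ifs <;> first | rfl | simp_all
    rw [corr, h]
  have Mexp : ∀ k' l' : Fin n, Mkl ρ k' l' = corr ρ k' l' 1 1 ^ 2 + corr ρ k' l' 1 2 ^ 2
      + corr ρ k' l' 2 1 ^ 2 + corr ρ k' l' 2 2 ^ 2 := by
    intro k' l'
    have h12 : (1 : ℕ) ≠ 2 := by norm_num
    have hIcc : (Finset.Icc 1 2 : Finset ℕ) = {1, 2} := by decide
    rw [Mkl, hIcc, Finset.sum_pair h12, Finset.sum_pair h12, Finset.sum_pair h12]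
    ring
  have I1 := cliqueAB ρ hρ hTr k l m hkl hlm hkm 1 2 pauli_one_sq pauli_two_sq pauli_swap'
  have I2 := cliqueAB ρ hρ hTr k l m hkl hlm hkm 2 1 pauli_two_sq pauli_one_sq pauli_swap
  have I3 := cliqueAC ρ hρ hTr k l m hkl hlm hkm 1 2 pauli_one_sq pauli_two_sq pauli_swap'
  have I4 := cliqueAC ρ hρ hTr k l m hkl hlm hkm 2 1 pauli_two_sq pauli_one_sq pauli_swap
  have I5 := cliqueBC ρ hρ hTr k l m hkl hlm hkm 1 2 pauli_one_sq pauli_two_sq pauli_swap'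
  have I6 := cliqueBC ρ hρ hTr k l m hkl hlm hkm 2 1 pauli_two_sq pauli_one_sq pauli_swap
  rw [← ekl 1 1, ← ekl 2 1, ← elm 2 1, ← elm 2 2] at I1
  rw [← ekl 1 2, ← ekl 2 2, ← elm 1 1, ← elm 1 2] at I2
  rw [← ekl 1 1, ← ekl 1 2, ← ekm 2 1, ← ekm 2 2] at I3
  rw [← ekl 2 1, ← ekl 2 2, ← ekm 1 1, ← ekm 1 2] at I4
  rw [← elm 1 1, ← elm 2 1, ← ekm 1 2, ← ekm 2 2] at I5
  rw [← elm 1 2, ← elm 2 2, ← ekm 1 1, ← ekm 2 1] at I6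
  rw [Mexp k l, Mexp l m, Mexp k m]
  linarith
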